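/- Consider the planar domain Ω = ⋃_{k≥0} Ω_k, where Ω_k is the k-th stage of Garnett's 4-corners Cantor construction inside the unit square with lower-left corner at (2k,0) (so Ω₀ is a unit square, Ω₁ is four squares of side 1/4 in the corners, etc., and dist(Ω_k,Ω_{k+1}) = 1). Then ∂Ω is 1-Ahlfors–David regular, but Ω fails the interior corkscrew condition: there is no c > 0 such that for every x ∈ ∂Ω and 0 < r < diam(∂Ω), B(x,r)∩Ω contains a ball of radius cr. -/

import Mathlib

open Set Metric MeasureTheory Filter Topology
open scoped ENNReal

noncomputable section

/-- `E ⊂ ℝ^{n+1}` is `n`-Ahlfors–David regular with constant `C`: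
`E` is closed and `C⁻¹ rⁿ ≤ Hⁿ(E ∩ B(x,r)) ≤ C rⁿ` for `x ∈ E`, `0 < r < diam E`. -/
def IsADR (n : ℕ) (E : Set (EuclideanSpace ℝ (Fin (n+1)))) (C : ℝ) : Prop :=
  IsClosed E ∧ 1 ≤ C ∧
  ∀ x ∈ E, ∀ r : ℝ, 0 < r → ENNReal.ofReal r < EMetric.diam E →
    ENNReal.ofReal (C⁻¹ * r ^ n) ≤ (Measure.hausdorffMeasure (n:ℝ)).restrict E (ball x r) ∧
    (Measure.hausdorffMeasure (n:ℝ)).restrict E (ball x r) ≤ ENNReal.ofReal (C * r ^ n)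

/-- Surface measure `σ = Hⁿ⌊E`. -/
def surf (n : ℕ) (E : Set (EuclideanSpace ℝ (Fin (n+1)))) :
    Measure (EuclideanSpace ℝ (Fin (n+1))) :=
  (Measure.hausdorffMeasure (n:ℝ)).restrict E

/-- The corner point of the unit square indexed by `j ∈ Fin 4`:
`(0,0), (3/4,0), (0,3/4), (3/4,3/4)`. -/
def cornerPt (j : Fin 4) : EuclideanSpace ℝ (Fin 2) :=
  WithLp.toLp 2 fun i => if i = 0 then (3/4 : ℝ) * ((j.val % 2 : ℕ) : ℝ) else (3/4 : ℝ) * ((j.val / 2 : ℕ) : ℝ)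

/-- The `k`-th stage of Garnett's 4-corners Cantor construction in the (open) unit square:
`stage 0` is the open unit square, and `stage (k+1)` consists of four copies of `stage k`
scaled by `1/4` and placed in the four corners. -/
def fourCornersStage : ℕ → Set (EuclideanSpace ℝ (Fin 2))
  | 0 => {x | ∀ i, x i ∈ Ioo (0:ℝ) 1}
  | (k+1) => ⋃ j : Fin 4, (fun x => cornerPt j + (1/4 : ℝ) • x) '' fourCornersStage k

/-- The horizontal translation placing the `k`-th stage in the unit square with lower-left
corner at `(2k, 0)`. -/
def shiftPt (k : ℕ) : EuclideanSpace ℝ (Fin 2) :=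
  WithLp.toLp 2 fun i => if i = 0 then (2 * k : ℝ) else 0

/-- The open set `Ω = ⋃_k Ω_k`, where `Ω_k` is the `k`-th 4-corners stage translated to
lower-left corner `(2k, 0)`. -/
def fourCornersDomain : Set (EuclideanSpace ℝ (Fin 2)) :=
  ⋃ k : ℕ, (fun x => shiftPt k + x) '' fourCornersStage k

/-!
The stage `Ω_{k+1}` consists of four copies of `Ω_k` scaled by `1/4` into the corner boxes
of the unit square, which lie at mutual distance `≥ 1/2`. Hence `∂Ω_{k+1}` is the disjoint
union of four quarter-size copies of `∂Ω_k`, and `H¹(∂Ω_k) = H¹(∂Ω_0) ∈ [1/2, 8]` for every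
`k`. Induction on `k` along this self-similarity gives, uniformly in `k`,
`H¹(∂Ω_k ∩ S) ≤ 32 diam S` (a set of diameter `< 1/4` meets only one copy, a larger one is
paid for by the total mass) and `H¹(∂Ω_k ∩ B(x,r)) ≥ r/16` for `r ≤ 2` (zoom into the copy
containing `x`, or, for `r > 1/2`, the whole copy lies in the ball). The translated stages
are at distance `1` from each other, so these estimates pass to `∂Ω = ⋃ₖ ((2k,0) + ∂Ω_k)`.

The same self-similarity shows that a ball inside `Ω_k` has radius at most `4⁻ᵏ/2`. At the
corner `(2k, 0)` and scale `1/2` the domain `Ω` coincides with `(2k,0) + Ω_k`, so a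
corkscrew ball of radius `c/2` forces `c ≤ 4⁻ᵏ` for every `k`.
-/

theorem frontier_iUnion_of_isOpen {ι X : Type*} [TopologicalSpace X] {s : ι → Set X}
    (hf : LocallyFinite s) (ho : ∀ i, IsOpen (s i)) (hd : Pairwise (Function.onFun Disjoint s)) :
    frontier (⋃ i, s i) = ⋃ i, frontier (s i) := by
  simp only [(isOpen_iUnion ho).frontier_eq, (ho _).frontier_eq, hf.closure_iUnion]
  ext x
  simp only [Set.mem_sdiff, mem_iUnion, not_exists]
  constructor
  · rintro ⟨⟨i, hi⟩, hx⟩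
    exact ⟨i, hi, hx i⟩
  · rintro ⟨i, hi, hxi⟩
    refine ⟨⟨i, hi⟩, fun j hj => ?_⟩
    obtain rfl | hij := eq_or_ne i j
    · exact hxi hj
    · exact ((hd hij).closure_left (ho j)).notMem_of_mem_left hi hj

section Line

variable {E : Type*} [NormedAddCommGroup E] [NormedSpace ℝ E]

theorem isometry_add_smul {e : E} (he : ‖e‖ = 1) (p : E) :
    Isometry fun t : ℝ => p + t • e :=
  Isometry.of_dist_eq fun t s => by
    rw [dist_add_left, dist_eq_norm, ← sub_smul, norm_smul, he, mul_one, Real.dist_eq,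
      Real.norm_eq_abs]

variable [MeasurableSpace E] [BorelSpace E]

theorem hausdorffMeasure_add_smul_image {e : E} (he : ‖e‖ = 1) (p : E) (s : Set ℝ) :
    μH[1] ((fun t : ℝ => p + t • e) '' s) = volume s := by
  rw [(isometry_add_smul he p).hausdorffMeasure_image (Or.inl zero_le_one), hausdorffMeasure_real]

theorem hausdorffMeasure_le_ediam_of_subset_range {e : E} (he : ‖e‖ = 1) {p : E} {s : Set E}
    (hs : s ⊆ range fun t : ℝ => p + t • e) : μH[1] s ≤ ediam s := by
  rw [← image_preimage_eq_of_subset hs, hausdorffMeasure_add_smul_image he,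
    (isometry_add_smul he p).ediam_image]
  exact Real.volume_le_diam _

end Line

open scoped Pointwise

abbrev E2 := EuclideanSpace ℝ (Fin 2)

theorem abs_sub_le_dist (x y : E2) (i : Fin 2) : |x i - y i| ≤ dist x y :=
  PiLp.dist_apply_le x y i

theorem dist_le_abs_sub_add_abs_sub (x y : E2) : dist x y ≤ |x 0 - y 0| + |x 1 - y 1| := by
  rw [EuclideanSpace.dist_eq, Fin.sum_univ_two, Real.sqrt_le_left (by positivity)]
  simp only [Real.dist_eq, sq_abs]
  nlinarith [abs_nonneg (x 0 - y 0), abs_nonneg (x 1 - y 1), sq_abs (x 0 - y 0), sq_abs (x 1 - y 1)]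

def closedUnitSquare : Set E2 := {x | ∀ i, x i ∈ Icc (0 : ℝ) 1}

theorem closure_fourCornersStage_zero : closure (fourCornersStage 0) = closedUnitSquare := by
  let e := (PiLp.continuousLinearEquiv 2 ℝ fun _ : Fin 2 => ℝ).toHomeomorph
  have h (s : Set ℝ) : {x : E2 | ∀ i, x i ∈ s} = e ⁻¹' univ.pi fun _ => s := by
    ext; simp [e]
  rw [fourCornersStage, closedUnitSquare, h, h, ← e.preimage_closure, closure_pi_set,
    closure_Ioo zero_ne_one]

def quarterMap (c : E2) : E2 ≃ₜ E2 :=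
  (Homeomorph.smulOfNeZero (1 / 4 : ℝ) (by norm_num)).trans (Homeomorph.addLeft c)

theorem quarterMap_apply (c x : E2) : quarterMap c x = c + (1 / 4 : ℝ) • x := rfl

@[simp]
theorem quarterMap_apply_apply (c x : E2) (i : Fin 2) : quarterMap c x i = c i + x i / 4 := by
  simp [quarterMap_apply]; ring

theorem fourCornersStage_succ (k : ℕ) :
    fourCornersStage (k + 1) = ⋃ j, quarterMap (cornerPt j) '' fourCornersStage k := rfl

theorem cornerPt_apply_eq (j : Fin 4) (i : Fin 2) : cornerPt j i = 0 ∨ cornerPt j i = 3 / 4 := by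
  fin_cases j <;> fin_cases i <;> simp [cornerPt]

theorem cornerPt_injective : Function.Injective cornerPt := by
  intro j j' h
  have h0 := congrArg (· 0) h
  have h1 := congrArg (· 1) h
  revert h0 h1
  fin_cases j <;> fin_cases j' <;> norm_num [cornerPt]

theorem half_le_dist_quarterMap {j j' : Fin 4} (h : j ≠ j') {a b : E2}
    (ha : a ∈ closedUnitSquare) (hb : b ∈ closedUnitSquare) :
    1 / 2 ≤ dist (quarterMap (cornerPt j) a) (quarterMap (cornerPt j') b) := by
  obtain ⟨i, hi⟩ : ∃ i, cornerPt j i ≠ cornerPt j' i := by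
    by_contra! hc
    exact h (cornerPt_injective (PiLp.ext hc))
  refine le_trans ?_ (abs_sub_le_dist _ _ i)
  have hai := ha i
  have hbi := hb i
  simp only [quarterMap_apply_apply, mem_Icc] at hai hbi ⊢
  rcases cornerPt_apply_eq j i with h1 | h1 <;> rcases cornerPt_apply_eq j' i with h2 | h2 <;>
    rw [h1, h2] at hi ⊢
  · exact absurd rfl hi
  · rw [abs_sub_comm, le_abs]; left; linarith
  · rw [le_abs]; left; linarith
  · exact absurd rfl hi

theorem fourCornersStage_subset_zero (k : ℕ) : fourCornersStage k ⊆ fourCornersStage 0 := by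
  induction k with
  | zero => exact subset_rfl
  | succ k ih =>
    rw [fourCornersStage_succ]
    rintro _ ⟨_, ⟨j, rfl⟩, y, hy, rfl⟩ i
    have := ih hy i
    rcases cornerPt_apply_eq j i with h | h <;>
      simp only [quarterMap_apply_apply, h, mem_Ioo] at this ⊢ <;> constructor <;> linarith

theorem closure_fourCornersStage_subset (k : ℕ) :
    closure (fourCornersStage k) ⊆ closedUnitSquare :=
  closure_fourCornersStage_zero ▸ closure_mono (fourCornersStage_subset_zero k)

theorem fourCornersStage_subset_closedUnitSquare (k : ℕ) :
    fourCornersStage k ⊆ closedUnitSquare :=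
  subset_closure.trans (closure_fourCornersStage_subset k)

theorem frontier_fourCornersStage_subset (k : ℕ) :
    frontier (fourCornersStage k) ⊆ closedUnitSquare :=
  frontier_subset_closure.trans (closure_fourCornersStage_subset k)

theorem isOpen_fourCornersStage (k : ℕ) : IsOpen (fourCornersStage k) := by
  induction k with
  | zero =>
    simp only [fourCornersStage, ofPred_forall]
    exact isOpen_iInter_of_finite fun i => isOpen_Ioo.preimage (by fun_prop)
  | succ k ih => exact isOpen_iUnion fun j => (quarterMap (cornerPt j)).isOpenMap _ ih

theorem disjoint_quarterMap_image {j j' : Fin 4} (h : j ≠ j') {s t : Set E2}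
    (hs : s ⊆ closedUnitSquare) (ht : t ⊆ closedUnitSquare) :
    Disjoint (quarterMap (cornerPt j) '' s) (quarterMap (cornerPt j') '' t) := by
  rw [Set.disjoint_left]
  rintro _ ⟨a, ha, rfl⟩ ⟨b, hb, hab⟩
  have := half_le_dist_quarterMap h (hs ha) (ht hb)
  rw [← hab, dist_self] at this
  norm_num at this

theorem mem_quarterMap_image_of_dist_lt {s : Set E2} (hs : s ⊆ closedUnitSquare) {j : Fin 4}
    {x y : E2} (hx : x ∈ quarterMap (cornerPt j) '' s)
    (hy : y ∈ ⋃ j, quarterMap (cornerPt j) '' s)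
    (hxy : dist x y < 1 / 2) : y ∈ quarterMap (cornerPt j) '' s := by
  obtain ⟨j', hj'⟩ := mem_iUnion.1 hy
  obtain rfl | h := eq_or_ne j j'
  · exact hj'
  obtain ⟨a, ha, rfl⟩ := hx
  obtain ⟨b, hb, rfl⟩ := hj'
  exact absurd (half_le_dist_quarterMap h (hs ha) (hs hb)) hxy.not_ge

theorem frontier_fourCornersStage_succ (k : ℕ) :
    frontier (fourCornersStage (k + 1)) =
      ⋃ j, quarterMap (cornerPt j) '' frontier (fourCornersStage k) := by
  have hs := fourCornersStage_subset_closedUnitSquare k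
  rw [fourCornersStage_succ, frontier_iUnion_of_isOpen (locallyFinite_of_finite _)
    (fun j => (quarterMap _).isOpenMap _ (isOpen_fourCornersStage k))
    (fun j j' h => disjoint_quarterMap_image h hs hs)]
  simp only [Homeomorph.image_frontier]

theorem dist_quarterMap (c x y : E2) : dist (quarterMap c x) (quarterMap c y) = dist x y / 4 := by
  rw [quarterMap_apply, quarterMap_apply, dist_add_left, dist_smul₀]
  norm_num; ring

theorem preimage_quarterMap_ball (c y : E2) (r : ℝ) :
    quarterMap c ⁻¹' ball (quarterMap c y) r = ball y (4 * r) := by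
  ext w
  simp only [mem_preimage, mem_ball, dist_quarterMap]
  constructor <;> intro <;> linarith

theorem edist_quarterMap (c x y : E2) :
    edist (quarterMap c x) (quarterMap c y) = 4⁻¹ * edist x y := by
  rw [quarterMap_apply, quarterMap_apply, edist_add_left, edist_smul₀]
  simp [ENNReal.smul_def]

theorem quarterMap_image_eq (c : E2) (s : Set E2) :
    quarterMap c '' s = c +ᵥ (1 / 4 : ℝ) • s := by
  rw [← image_smul, ← image_vadd, image_image]; rfl

theorem hausdorffMeasure_quarterMap_image (c : E2) (s : Set E2) :
    μH[1] (quarterMap c '' s) = 4⁻¹ * μH[1] s := by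
  rw [quarterMap_image_eq, hausdorffMeasure_vadd _ (Or.inl zero_le_one),
    Measure.hausdorffMeasure_smul₀ zero_le_one (by norm_num)]
  simp [ENNReal.smul_def]

theorem mem_frontier_fourCornersStage_zero {x : E2} :
    x ∈ frontier (fourCornersStage 0) ↔
      x ∈ closedUnitSquare ∧ ∃ i, x i ∉ Ioo (0 : ℝ) 1 := by
  rw [(isOpen_fourCornersStage 0).frontier_eq, closure_fourCornersStage_zero, Set.mem_sdiff]
  simp only [fourCornersStage, mem_ofPred_eq, not_forall]

theorem hausdorffMeasure_frontier_fourCornersStage (k : ℕ) :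
    μH[1] (frontier (fourCornersStage k)) = μH[1] (frontier (fourCornersStage 0)) := by
  induction k with
  | zero => rfl
  | succ k ih =>
    have hs := frontier_fourCornersStage_subset k
    rw [frontier_fourCornersStage_succ, measure_iUnion
      (fun j j' h => disjoint_quarterMap_image h hs hs)
      (fun j => ((quarterMap _).isClosedMap _ isClosed_frontier).measurableSet), tsum_fintype]
    simp only [hausdorffMeasure_quarterMap_image, ih, Finset.sum_const, Finset.card_univ,
      Fintype.card_fin, nsmul_eq_mul, ← mul_assoc]
    rw [Nat.cast_ofNat, ENNReal.mul_inv_cancel (by norm_num) (by norm_num), one_mul]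

theorem setOf_apply_eq_subset_range {i j : Fin 2} (hij : i ≠ j) (a : ℝ) :
    {x : E2 | x i = a} ⊆
      range fun t : ℝ => EuclideanSpace.single i a + t • EuclideanSpace.single j 1 := by
  intro x hx
  refine ⟨x j, ?_⟩
  ext l
  fin_cases i <;> fin_cases j <;> fin_cases l <;> simp_all

theorem hausdorffMeasure_setOf_apply_eq_inter_le (i : Fin 2) (a : ℝ) (S : Set E2) :
    μH[1] ({x : E2 | x i = a} ∩ S) ≤ ediam S := by
  obtain ⟨j, hj⟩ := exists_ne i
  exact (hausdorffMeasure_le_ediam_of_subset_range (by simp)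
    (inter_subset_left.trans (setOf_apply_eq_subset_range hj.symm a))).trans
    (ediam_mono inter_subset_right)

theorem hausdorffMeasure_frontier_fourCornersStage_zero_inter_le (S : Set E2) :
    μH[1] (frontier (fourCornersStage 0) ∩ S) ≤ 4 * ediam S := by
  have hsub : frontier (fourCornersStage 0) ∩ S ⊆
      ⋃ i : Fin 2, ({x | x i = 0} ∩ S ∪ {x | x i = 1} ∩ S) := by
    rintro x ⟨hx, hxS⟩
    obtain ⟨hx, i, hi⟩ := mem_frontier_fourCornersStage_zero.1 hx
    have hxi : x i ∈ Icc (0 : ℝ) 1 \ Ioo 0 1 := ⟨hx i, hi⟩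
    rw [Icc_sdiff_Ioo_same zero_le_one] at hxi
    rcases hxi with h | h
    · exact mem_iUnion.2 ⟨i, Or.inl ⟨h, hxS⟩⟩
    · exact mem_iUnion.2 ⟨i, Or.inr ⟨h, hxS⟩⟩
  calc μH[1] (frontier (fourCornersStage 0) ∩ S)
      ≤ ∑ i : Fin 2, μH[1] ({x | x i = 0} ∩ S ∪ {x | x i = 1} ∩ S) :=
        (measure_mono hsub).trans (measure_iUnion_fintype_le _ _)
    _ ≤ ∑ _i : Fin 2, (ediam S + ediam S) := Finset.sum_le_sum fun i _ =>
        (measure_union_le _ _).trans (add_le_add (hausdorffMeasure_setOf_apply_eq_inter_le i 0 S)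
          (hausdorffMeasure_setOf_apply_eq_inter_le i 1 S))
    _ = 4 * ediam S := by simp; ring

theorem le_hausdorffMeasure_frontier_fourCornersStage_zero_inter_ball {x : E2}
    (hx : x ∈ frontier (fourCornersStage 0)) {r : ℝ} (hr₀ : 0 < r) (hr : r ≤ 2) :
    ENNReal.ofReal (r / 4) ≤ μH[1] (frontier (fourCornersStage 0) ∩ ball x r) := by
  obtain ⟨hx, i, hi⟩ := mem_frontier_fourCornersStage_zero.1 hx
  obtain ⟨j, hji⟩ := exists_ne i
  have hj := hx j
  obtain ⟨a, ha₁, ha₂, ha₃, ha₄⟩ :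
      ∃ a : ℝ, -(r / 4) ≤ a ∧ a ≤ 0 ∧ 0 ≤ x j + a ∧ x j + a + r / 4 ≤ 1 := by
    rcases le_total (x j) (1 / 2) with h | h
    · exact ⟨0, by linarith, le_rfl, by linarith [hj.1], by linarith⟩
    · exact ⟨-(r / 4), le_rfl, by linarith, by linarith, by linarith [hj.2]⟩
  have hseg : (fun t : ℝ => x + t • EuclideanSpace.single j 1) '' Ioo a (a + r / 4) ⊆
      frontier (fourCornersStage 0) ∩ ball x r := by
    rintro _ ⟨t, ⟨ht₁, ht₂⟩, rfl⟩
    refine ⟨mem_frontier_fourCornersStage_zero.2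
      ⟨fun l => ?_, i, by simpa [hji.symm] using hi⟩, ?_⟩
    · by_cases hl : l = j
      · subst hl
        simp only [PiLp.add_apply, PiLp.smul_apply, PiLp.single_apply, if_true, smul_eq_mul,
          mul_one, mem_Icc]
        constructor <;> linarith
      · simpa [hl] using hx l
    · rw [mem_ball, dist_self_add_left, norm_smul, PiLp.norm_single, norm_one, mul_one,
        Real.norm_eq_abs, abs_lt]
      constructor <;> linarith
  calc ENNReal.ofReal (r / 4) = volume (Ioo a (a + r / 4)) := by
        rw [Real.volume_Ioo, add_sub_cancel_left]
    _ = μH[1] ((fun t : ℝ => x + t • EuclideanSpace.single j 1) '' Ioo a (a + r / 4)) :=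
        (hausdorffMeasure_add_smul_image (by simp) _ _).symm
    _ ≤ _ := measure_mono hseg

theorem dist_le_two_of_mem_closedUnitSquare {x y : E2} (hx : x ∈ closedUnitSquare)
    (hy : y ∈ closedUnitSquare) : dist x y ≤ 2 := by
  have h (i : Fin 2) : |x i - y i| ≤ 1 := by
    simpa [Real.dist_eq] using Real.dist_le_of_mem_Icc (hx i) (hy i)
  linarith [h 0, h 1, dist_le_abs_sub_add_abs_sub x y]

theorem ediam_closedUnitSquare_le : ediam closedUnitSquare ≤ 2 :=
  ediam_le fun x hx y hy => by
    rw [edist_dist]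
    exact (ENNReal.ofReal_le_ofReal (dist_le_two_of_mem_closedUnitSquare hx hy)).trans_eq
      (ENNReal.ofReal_ofNat 2)

theorem hausdorffMeasure_frontier_fourCornersStage_le (k : ℕ) :
    μH[1] (frontier (fourCornersStage k)) ≤ 8 := by
  have h := (ediam_mono (frontier_fourCornersStage_subset 0)).trans ediam_closedUnitSquare_le
  rw [hausdorffMeasure_frontier_fourCornersStage, ← inter_self (frontier _)]
  calc _ ≤ 4 * ediam (frontier (fourCornersStage 0)) :=
        hausdorffMeasure_frontier_fourCornersStage_zero_inter_le _
    _ ≤ 4 * 2 := by gcongr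
    _ = 8 := by norm_num

theorem ENNReal.inv_four_eq_ofReal : (4⁻¹ : ℝ≥0∞) = ENNReal.ofReal (1 / 4) := by
  rw [one_div, ENNReal.ofReal_inv_of_pos (by norm_num), ENNReal.ofReal_ofNat]

theorem exists_iUnion_quarterMap_image_inter_subset {s : Set E2} (hs : s ⊆ closedUnitSquare)
    {S : Set E2} (hS : ediam S < 4⁻¹) : ∃ j, (⋃ j, quarterMap (cornerPt j) '' s) ∩ S ⊆
      quarterMap (cornerPt j) '' (s ∩ quarterMap (cornerPt j) ⁻¹' S) := by
  obtain h | ⟨x, hx, hxS⟩ := ((⋃ j, quarterMap (cornerPt j) '' s) ∩ S).eq_empty_or_nonempty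
  · exact ⟨0, h.subset.trans (empty_subset _)⟩
  obtain ⟨j, hxj⟩ := mem_iUnion.1 hx
  refine ⟨j, fun y ⟨hy, hyS⟩ => ?_⟩
  rw [image_inter_preimage]
  refine ⟨mem_quarterMap_image_of_dist_lt hs hxj hy ?_, hyS⟩
  have := (edist_le_ediam_of_mem hxS hyS).trans_lt hS
  rw [ENNReal.inv_four_eq_ofReal, edist_lt_ofReal] at this
  linarith

theorem ediam_preimage_quarterMap_le (c : E2) (S : Set E2) :
    ediam (quarterMap c ⁻¹' S) ≤ 4 * ediam S :=
  ediam_le fun a ha b hb =>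
    calc edist a b = 4 * edist (quarterMap c a) (quarterMap c b) := by
          rw [edist_quarterMap, ← mul_assoc, ENNReal.mul_inv_cancel (by norm_num) (by norm_num),
            one_mul]
      _ ≤ 4 * ediam S := by gcongr; exact edist_le_ediam_of_mem ha hb

theorem hausdorffMeasure_frontier_fourCornersStage_inter_le (k : ℕ) (S : Set E2) :
    μH[1] (frontier (fourCornersStage k) ∩ S) ≤ 32 * ediam S := by
  induction k generalizing S with
  | zero =>
    exact (hausdorffMeasure_frontier_fourCornersStage_zero_inter_le S).trans (by gcongr; norm_num)
  | succ k ih =>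
    rcases le_or_gt 4⁻¹ (ediam S) with hS | hS
    · calc _ ≤ μH[1] (frontier (fourCornersStage (k + 1))) := measure_mono inter_subset_left
        _ ≤ 32 * 4⁻¹ := (hausdorffMeasure_frontier_fourCornersStage_le _).trans_eq
          (by norm_num [← div_eq_mul_inv, ENNReal.eq_div_iff])
        _ ≤ 32 * ediam S := by gcongr
    obtain ⟨j, hj⟩ :=
      exists_iUnion_quarterMap_image_inter_subset (frontier_fourCornersStage_subset k) hS
    rw [frontier_fourCornersStage_succ]
    calc _ ≤ μH[1] (quarterMap (cornerPt j) ''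
          (frontier (fourCornersStage k) ∩ quarterMap (cornerPt j) ⁻¹' S)) := measure_mono hj
      _ = 4⁻¹ * μH[1] (frontier (fourCornersStage k) ∩ quarterMap (cornerPt j) ⁻¹' S) :=
          hausdorffMeasure_quarterMap_image _ _
      _ ≤ 4⁻¹ * (32 * (4 * ediam S)) := by
          gcongr; exact (ih _).trans (by gcongr; exact ediam_preimage_quarterMap_le _ _)
      _ = 32 * ediam S := by
          rw [mul_left_comm, ← mul_assoc 4⁻¹, ENNReal.inv_mul_cancel (by norm_num) (by norm_num),
            one_mul]

theorem zero_mem_frontier_fourCornersStage (k : ℕ) :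
    (0 : E2) ∈ frontier (fourCornersStage k) := by
  induction k with
  | zero => exact mem_frontier_fourCornersStage_zero.2 ⟨fun i => by simp, 0, by simp⟩
  | succ k ih =>
    rw [frontier_fourCornersStage_succ]
    refine mem_iUnion.2 ⟨0, 0, ih, ?_⟩
    ext i; fin_cases i <;> simp [cornerPt]

theorem ofReal_half_le_hausdorffMeasure_frontier_fourCornersStage (k : ℕ) :
    ENNReal.ofReal (1 / 2) ≤ μH[1] (frontier (fourCornersStage k)) := by
  rw [hausdorffMeasure_frontier_fourCornersStage]
  calc ENNReal.ofReal (1 / 2) = ENNReal.ofReal (2 / 4) := by norm_num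
    _ ≤ _ := le_hausdorffMeasure_frontier_fourCornersStage_zero_inter_ball
          (zero_mem_frontier_fourCornersStage 0) two_pos le_rfl
    _ ≤ _ := measure_mono inter_subset_left

theorem le_hausdorffMeasure_frontier_fourCornersStage_inter_ball (k : ℕ) {x : E2}
    (hx : x ∈ frontier (fourCornersStage k)) {r : ℝ} (hr₀ : 0 < r) (hr : r ≤ 2) :
    ENNReal.ofReal (r / 16) ≤ μH[1] (frontier (fourCornersStage k) ∩ ball x r) := by
  induction k generalizing x r with
  | zero =>
    exact (ENNReal.ofReal_le_ofReal (by linarith : r / 16 ≤ r / 4)).trans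
      (le_hausdorffMeasure_frontier_fourCornersStage_zero_inter_ball hx hr₀ hr)
  | succ k ih =>
    have hs := frontier_fourCornersStage_subset k
    rw [frontier_fourCornersStage_succ] at hx ⊢
    obtain ⟨j, y, hy, rfl⟩ := mem_iUnion.1 hx
    set f := quarterMap (cornerPt j)
    have hf : f '' frontier (fourCornersStage k) ⊆
        ⋃ j, quarterMap (cornerPt j) '' frontier (fourCornersStage k) :=
      subset_iUnion (fun j => quarterMap (cornerPt j) '' frontier (fourCornersStage k)) j
    rcases le_or_gt r (1 / 2) with hr' | hr'
    · calc ENNReal.ofReal (r / 16) = 4⁻¹ * ENNReal.ofReal (4 * r / 16) := by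
            rw [ENNReal.inv_four_eq_ofReal, ← ENNReal.ofReal_mul (by norm_num)]; ring_nf
        _ ≤ 4⁻¹ * μH[1] (frontier (fourCornersStage k) ∩ ball y (4 * r)) := by
            gcongr; exact ih hy (by positivity) (by linarith)
        _ = μH[1] (f '' frontier (fourCornersStage k) ∩ ball (f y) r) := by
            rw [← hausdorffMeasure_quarterMap_image, ← preimage_quarterMap_ball,
              image_inter_preimage]
        _ ≤ _ := measure_mono (inter_subset_inter_left _ hf)
    · calc ENNReal.ofReal (r / 16) ≤ 4⁻¹ * ENNReal.ofReal (1 / 2) := by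
            rw [ENNReal.inv_four_eq_ofReal, ← ENNReal.ofReal_mul (by norm_num)]
            exact ENNReal.ofReal_le_ofReal (by linarith)
        _ ≤ 4⁻¹ * μH[1] (frontier (fourCornersStage k)) := by
            gcongr; exact ofReal_half_le_hausdorffMeasure_frontier_fourCornersStage k
        _ = μH[1] (f '' frontier (fourCornersStage k)) :=
            (hausdorffMeasure_quarterMap_image _ _).symm
        _ ≤ _ := by
            refine measure_mono (subset_inter hf ?_)
            rintro _ ⟨a, ha, rfl⟩
            rw [mem_ball, dist_quarterMap]
            linarith [dist_le_two_of_mem_closedUnitSquare (hs ha) (hs hy)]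

theorem le_of_ball_subset_fourCornersStage_zero {z : E2} {ρ : ℝ}
    (h : ball z ρ ⊆ fourCornersStage 0) : ρ ≤ 1 / 2 := by
  by_contra! hρ
  obtain ⟨t, ht, hout⟩ : ∃ t : ℝ, |t| < ρ ∧ z 0 + t ∉ Ioo (0 : ℝ) 1 := by
    rcases le_total (z 0) (1 / 2) with h | h
    · exact ⟨-(1 / 2), by rw [abs_neg, abs_of_pos (by norm_num)]; exact hρ,
        fun hh => by linarith [hh.1]⟩
    · exact ⟨1 / 2, by rw [abs_of_pos (by norm_num)]; exact hρ, fun hh => by linarith [hh.2]⟩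
  have hmem : z + t • EuclideanSpace.single 0 1 ∈ ball z ρ := by
    rwa [mem_ball, dist_self_add_left, norm_smul, PiLp.norm_single, norm_one, mul_one,
      Real.norm_eq_abs]
  exact hout (by simpa using h hmem 0)

theorem le_of_ball_subset_fourCornersStage {k : ℕ} {z : E2} {ρ : ℝ}
    (h : ball z ρ ⊆ fourCornersStage k) : ρ ≤ (1 / 4) ^ k / 2 := by
  induction k generalizing z ρ with
  | zero => simpa using le_of_ball_subset_fourCornersStage_zero h
  | succ k ih =>
    have hρ := le_of_ball_subset_fourCornersStage_zero (h.trans (fourCornersStage_subset_zero _))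
    rcases le_or_gt ρ 0 with hρ₀ | hρ₀
    · exact hρ₀.trans (by positivity)
    have hs := fourCornersStage_subset_closedUnitSquare k
    rw [fourCornersStage_succ] at h
    obtain ⟨j, hz⟩ := mem_iUnion.1 (h (mem_ball_self hρ₀))
    obtain ⟨y, -, rfl⟩ := id hz
    have hball :
        ball (quarterMap (cornerPt j) y) ρ ⊆ quarterMap (cornerPt j) '' fourCornersStage k :=
      fun w hw => mem_quarterMap_image_of_dist_lt hs hz (h hw)
        (by rw [mem_ball, dist_comm] at hw; linarith)
    have := ih (z := y) (ρ := 4 * ρ) <| by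
      rw [← preimage_quarterMap_ball, ← (quarterMap _).preimage_image (fourCornersStage k)]
      exact preimage_mono hball
    rw [pow_succ]
    linarith

theorem fourCornersDomain_eq : fourCornersDomain = ⋃ k, shiftPt k +ᵥ fourCornersStage k := rfl

theorem mem_Icc_of_mem_shiftPt_vadd {k : ℕ} {s : Set E2} (hs : s ⊆ closedUnitSquare) {x : E2}
    (hx : x ∈ shiftPt k +ᵥ s) :
    x 0 ∈ Icc (2 * k : ℝ) (2 * k + 1) ∧ x 1 ∈ Icc (0 : ℝ) 1 := by
  obtain ⟨y, hy, rfl⟩ := hx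
  have h0 := hs hy 0
  have h1 := hs hy 1
  simp only [mem_Icc] at h0 h1
  norm_num [shiftPt]
  constructor <;> constructor <;> linarith

theorem eq_of_abs_sub_lt_one {m m' : ℕ} {a b : ℝ} (ha : a ∈ Icc (2 * m : ℝ) (2 * m + 1))
    (hb : b ∈ Icc (2 * m' : ℝ) (2 * m' + 1)) (hab : |a - b| < 1) : m = m' := by
  rw [abs_lt] at hab
  have h₁ : (m : ℝ) < m' + 1 := by linarith [ha.1, hb.2]
  have h₂ : (m' : ℝ) < m + 1 := by linarith [ha.2, hb.1]
  norm_cast at h₁ h₂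
  omega

theorem disjoint_shiftPt_vadd {m m' : ℕ} (h : m ≠ m') {s t : Set E2}
    (hs : s ⊆ closedUnitSquare) (ht : t ⊆ closedUnitSquare) :
    Disjoint (shiftPt m +ᵥ s) (shiftPt m' +ᵥ t) :=
  Set.disjoint_left.2 fun _ hx hx' => h <| eq_of_abs_sub_lt_one
    (mem_Icc_of_mem_shiftPt_vadd hs hx).1 (mem_Icc_of_mem_shiftPt_vadd ht hx').1 (by simp)

def boundaryCell (k : ℕ) : Set E2 := shiftPt k +ᵥ frontier (fourCornersStage k)

theorem frontier_fourCornersDomain : frontier fourCornersDomain = ⋃ k, boundaryCell k := by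
  have hs := fourCornersStage_subset_closedUnitSquare
  have hlf : LocallyFinite fun k => shiftPt k +ᵥ fourCornersStage k := by
    intro x
    refine ⟨ball x 1, ball_mem_nhds x one_pos, (finite_Iio ⌈x 0 + 1⌉₊).subset ?_⟩
    rintro m ⟨y, hym, hyx⟩
    have hy := (mem_Icc_of_mem_shiftPt_vadd (hs m) hym).1
    have := (abs_sub_le_dist y x 0).trans_lt (mem_ball.1 hyx)
    rw [abs_lt] at this
    exact Nat.lt_ceil.2 (by linarith [hy.1, (m.cast_nonneg : (0 : ℝ) ≤ m)])
  rw [fourCornersDomain_eq, frontier_iUnion_of_isOpen hlf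
    (fun k => (isOpen_fourCornersStage k).vadd _)
    fun m m' h => disjoint_shiftPt_vadd h (hs m) (hs m')]
  exact iUnion_congr fun k => ((Homeomorph.addLeft (shiftPt k)).image_frontier _).symm

theorem hausdorffMeasure_vadd_inter (v : E2) (s t : Set E2) :
    μH[1] ((v +ᵥ s) ∩ t) = μH[1] (s ∩ (-v +ᵥ t)) := by
  rw [← hausdorffMeasure_vadd v (Or.inl zero_le_one) (s ∩ _), vadd_set_inter, vadd_neg_vadd]

theorem mem_Icc_of_mem_boundaryCell {k : ℕ} {x : E2} (hx : x ∈ boundaryCell k) :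
    x 0 ∈ Icc (2 * k : ℝ) (2 * k + 1) ∧ x 1 ∈ Icc (0 : ℝ) 1 :=
  mem_Icc_of_mem_shiftPt_vadd (frontier_fourCornersStage_subset k) hx

theorem hausdorffMeasure_boundaryCell (k : ℕ) :
    μH[1] (boundaryCell k) = μH[1] (frontier (fourCornersStage k)) :=
  hausdorffMeasure_vadd _ (Or.inl zero_le_one) _

theorem hausdorffMeasure_boundaryCell_inter_ball_le (k : ℕ) (x : E2) (r : ℝ) :
    μH[1] (boundaryCell k ∩ ball x r) ≤ ENNReal.ofReal (64 * r) :=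
  calc μH[1] (boundaryCell k ∩ ball x r)
      = μH[1] (frontier (fourCornersStage k) ∩ (-shiftPt k +ᵥ ball x r)) :=
        hausdorffMeasure_vadd_inter _ _ _
    _ ≤ 32 * ediam (-shiftPt k +ᵥ ball x r) :=
        hausdorffMeasure_frontier_fourCornersStage_inter_le _ _
    _ ≤ 32 * (2 * ENNReal.ofReal r) := by
        rw [ediam_vadd, ← eball_ofReal]; gcongr; exact ediam_eball_le
    _ = ENNReal.ofReal (64 * r) := by
        rw [← mul_assoc, ENNReal.ofReal_mul (by norm_num)]; norm_num

theorem le_hausdorffMeasure_boundaryCell_inter_ball {k : ℕ} {x : E2} (hx : x ∈ boundaryCell k)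
    {r : ℝ} (hr₀ : 0 < r) (hr : r ≤ 2) :
    ENNReal.ofReal (r / 16) ≤ μH[1] (boundaryCell k ∩ ball x r) :=
  calc ENNReal.ofReal (r / 16)
      ≤ μH[1] (frontier (fourCornersStage k) ∩ ball (-shiftPt k +ᵥ x) r) :=
        le_hausdorffMeasure_frontier_fourCornersStage_inter_ball k
          (mem_vadd_set_iff_neg_vadd_mem.1 hx) hr₀ hr
    _ = μH[1] (boundaryCell k ∩ ball x r) := by
        rw [boundaryCell, hausdorffMeasure_vadd_inter, vadd_ball]

theorem frontier_fourCornersDomain_inter_ball_subset_boundaryCell {m : ℕ} {x : E2}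
    (hx : x ∈ boundaryCell m) {r : ℝ} (hr : r ≤ 1 / 2) :
    frontier fourCornersDomain ∩ ball x r ⊆ boundaryCell m := by
  rintro y ⟨hy, hyx⟩
  obtain ⟨m', hym'⟩ := mem_iUnion.1 (frontier_fourCornersDomain ▸ hy)
  obtain rfl : m' = m := eq_of_abs_sub_lt_one (mem_Icc_of_mem_boundaryCell hym').1
    (mem_Icc_of_mem_boundaryCell hx).1
    (by linarith [(abs_sub_le_dist y x 0).trans_lt (mem_ball.1 hyx)])
  exact hym'

theorem frontier_fourCornersDomain_inter_ball_subset_biUnion {m : ℕ} {x : E2}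
    (hx : x ∈ boundaryCell m) (r : ℝ) :
    frontier fourCornersDomain ∩ ball x r ⊆
      ⋃ m' ∈ Finset.Icc (m - ⌈r⌉₊) (m + ⌈r⌉₊), boundaryCell m' := by
  rintro y ⟨hy, hyx⟩
  obtain ⟨m', hym'⟩ := mem_iUnion.1 (frontier_fourCornersDomain ▸ hy)
  have hxc := (mem_Icc_of_mem_boundaryCell hx).1
  have hyc := (mem_Icc_of_mem_boundaryCell hym').1
  have := (abs_sub_le_dist y x 0).trans_lt (mem_ball.1 hyx)
  rw [abs_lt] at this
  have hr := Nat.le_ceil r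
  have h₁ : (m' : ℝ) < m + ⌈r⌉₊ + 1 := by linarith [hyc.1, hxc.2]
  have h₂ : (m : ℝ) < m' + ⌈r⌉₊ + 1 := by linarith [hyc.2, hxc.1]
  norm_cast at h₁ h₂
  exact mem_iUnion₂.2 ⟨m', Finset.mem_Icc.2 ⟨by omega, by omega⟩, hym'⟩

theorem boundaryCell_add_subset_ball {m : ℕ} {x : E2} (hx : x ∈ boundaryCell m) {i : ℕ}
    {r : ℝ} (hi : 2 * i + 2 < r) : boundaryCell (m + i) ⊆ ball x r := by
  intro y hy
  have hxc := mem_Icc_of_mem_boundaryCell hx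
  have hyc := mem_Icc_of_mem_boundaryCell hy
  push_cast at hyc
  have h₀ : |y 0 - x 0| ≤ 2 * i + 1 :=
    abs_le.2 ⟨by linarith [hyc.1.1, hxc.1.2], by linarith [hyc.1.2, hxc.1.1]⟩
  have h₁ : |y 1 - x 1| ≤ 1 :=
    abs_le.2 ⟨by linarith [hyc.2.1, hxc.2.2], by linarith [hyc.2.2, hxc.2.1]⟩
  rw [mem_ball]
  linarith [dist_le_abs_sub_add_abs_sub y x]

theorem hausdorffMeasure_frontier_fourCornersDomain_inter_ball_le {x : E2}
    (hx : x ∈ frontier fourCornersDomain) {r : ℝ} (hr : 0 < r) :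
    μH[1] (frontier fourCornersDomain ∩ ball x r) ≤ ENNReal.ofReal (64 * r) := by
  obtain ⟨m, hxm⟩ := mem_iUnion.1 (frontier_fourCornersDomain ▸ hx)
  rcases le_or_gt r (1 / 2) with hr' | hr'
  · exact (measure_mono (subset_inter
      (frontier_fourCornersDomain_inter_ball_subset_boundaryCell hxm hr') inter_subset_right)).trans
      (hausdorffMeasure_boundaryCell_inter_ball_le m x r)
  calc μH[1] (frontier fourCornersDomain ∩ ball x r)
      ≤ ∑ m' ∈ Finset.Icc (m - ⌈r⌉₊) (m + ⌈r⌉₊), μH[1] (boundaryCell m') :=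
        (measure_mono (frontier_fourCornersDomain_inter_ball_subset_biUnion hxm r)).trans
          (measure_biUnion_finset_le _ _)
    _ ≤ ∑ _m' ∈ Finset.Icc (m - ⌈r⌉₊) (m + ⌈r⌉₊), (8 : ℝ≥0∞) :=
        Finset.sum_le_sum fun m' _ => (hausdorffMeasure_boundaryCell m').trans_le
          (hausdorffMeasure_frontier_fourCornersStage_le m')
    _ ≤ ((2 * ⌈r⌉₊ + 1 : ℕ) : ℝ≥0∞) * 8 := by
        rw [Finset.sum_const, nsmul_eq_mul]; gcongr; rw [Nat.card_Icc]; omega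
    _ ≤ ENNReal.ofReal (64 * r) := by
        rw [← ENNReal.ofReal_natCast, ← ENNReal.ofReal_ofNat 8,
          ← ENNReal.ofReal_mul (by positivity)]
        refine ENNReal.ofReal_le_ofReal ?_
        have := Nat.ceil_lt_add_one hr.le
        push_cast; linarith

theorem le_hausdorffMeasure_frontier_fourCornersDomain_inter_ball {x : E2}
    (hx : x ∈ frontier fourCornersDomain) {r : ℝ} (hr : 0 < r) :
    ENNReal.ofReal (r / 16) ≤ μH[1] (frontier fourCornersDomain ∩ ball x r) := by
  rw [frontier_fourCornersDomain] at hx ⊢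
  obtain ⟨m, hxm⟩ := mem_iUnion.1 hx
  rcases le_or_gt r 2 with hr' | hr'
  · exact (le_hausdorffMeasure_boundaryCell_inter_ball hxm hr hr').trans
      (measure_mono (inter_subset_inter_left _ (subset_iUnion boundaryCell m)))
  set N := ⌈(r - 2) / 2⌉₊
  have hN : (r - 2) / 2 ≤ N := Nat.le_ceil _
  have hN₁ : (1 : ℝ) ≤ N := by exact_mod_cast Nat.ceil_pos.2 (by linarith)
  have hsub :
      ⋃ i ∈ Finset.range N, boundaryCell (m + i) ⊆ (⋃ k, boundaryCell k) ∩ ball x r :=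
    iUnion₂_subset fun i hi => subset_inter (subset_iUnion boundaryCell _)
      (boundaryCell_add_subset_ball hxm (by linarith [Nat.lt_ceil.1 (Finset.mem_range.1 hi)]))
  calc ENNReal.ofReal (r / 16) ≤ N * ENNReal.ofReal (1 / 2) := by
        rw [← ENNReal.ofReal_natCast, ← ENNReal.ofReal_mul (by positivity)]
        exact ENNReal.ofReal_le_ofReal (by linarith)
    _ = ∑ _i ∈ Finset.range N, ENNReal.ofReal (1 / 2) := by simp
    _ ≤ ∑ i ∈ Finset.range N, μH[1] (boundaryCell (m + i)) := Finset.sum_le_sum fun i _ =>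
        (ofReal_half_le_hausdorffMeasure_frontier_fourCornersStage _).trans_eq
          (hausdorffMeasure_boundaryCell _).symm
    _ = μH[1] (⋃ i ∈ Finset.range N, boundaryCell (m + i)) :=
        (measure_biUnion_finset (fun i _ i' _ h => disjoint_shiftPt_vadd (by omega)
          (frontier_fourCornersStage_subset _) (frontier_fourCornersStage_subset _))
          fun i _ => (isClosed_frontier.vadd _).measurableSet).symm
    _ ≤ _ := measure_mono hsub

theorem isADR_frontier_fourCornersDomain : IsADR 1 (frontier fourCornersDomain) 64 := by
  refine ⟨isClosed_frontier, by norm_num, fun x hx r hr _ => ?_⟩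
  rw [Measure.restrict_apply measurableSet_ball, inter_comm, Nat.cast_one, pow_one]
  refine ⟨(ENNReal.ofReal_le_ofReal (by linarith)).trans
    (le_hausdorffMeasure_frontier_fourCornersDomain_inter_ball hx hr),
    hausdorffMeasure_frontier_fourCornersDomain_inter_ball_le hx hr⟩

theorem shiftPt_mem_frontier_fourCornersDomain (k : ℕ) :
    shiftPt k ∈ frontier fourCornersDomain := by
  rw [frontier_fourCornersDomain]
  exact mem_iUnion.2 ⟨k, 0, zero_mem_frontier_fourCornersStage k, add_zero _⟩

theorem ofReal_half_lt_ediam_frontier_fourCornersDomain :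
    ENNReal.ofReal (1 / 2) < ediam (frontier fourCornersDomain) := by
  refine lt_of_lt_of_le ?_ (edist_le_ediam_of_mem (shiftPt_mem_frontier_fourCornersDomain 0)
    (shiftPt_mem_frontier_fourCornersDomain 1))
  rw [edist_dist, ENNReal.ofReal_lt_ofReal_iff_of_nonneg (by norm_num)]
  refine lt_of_lt_of_le ?_ (abs_sub_le_dist _ _ 0)
  norm_num [shiftPt]

theorem le_of_ball_subset_ball_shiftPt_inter_fourCornersDomain {k : ℕ} {z : E2} {ρ : ℝ}
    (h : ball z ρ ⊆ ball (shiftPt k) (1 / 2) ∩ fourCornersDomain) :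
    ρ ≤ (1 / 4) ^ k / 2 := by
  have hs := fourCornersStage_subset_closedUnitSquare
  refine le_of_ball_subset_fourCornersStage (z := -shiftPt k +ᵥ z) ?_
  rw [← vadd_ball, Set.vadd_set_subset_iff_subset_neg_vadd_set, neg_neg]
  intro w hw
  obtain ⟨hwk, hw⟩ := h hw
  obtain ⟨m, hwm⟩ := mem_iUnion.1 hw
  obtain rfl : m = k := eq_of_abs_sub_lt_one (mem_Icc_of_mem_shiftPt_vadd (hs m) hwm).1
    (show shiftPt k 0 ∈ Icc (2 * k : ℝ) (2 * k + 1) by simp [shiftPt])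
    (by linarith [(abs_sub_le_dist w (shiftPt k) 0).trans_lt (mem_ball.1 hwk)])
  exact hwm

/-- Example 3: failure of the interior corkscrew condition.
For the union `Ω` of the stages of Garnett's 4-corners construction:
`∂Ω` is 1-Ahlfors–David regular, but `Ω` fails the interior corkscrew condition:
there is no `c > 0` such that for every `x ∈ ∂Ω` and `0 < r < diam ∂Ω`, `B(x,r) ∩ Ω`
contains a ball of radius `c r`. -/
theorem four_corners_no_corkscrew :
    (∃ Cadr : ℝ, IsADR 1 (frontier fourCornersDomain) Cadr) ∧
    ¬ ∃ c : ℝ, 0 < c ∧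
      ∀ x ∈ frontier fourCornersDomain, ∀ r : ℝ, 0 < r →
        ENNReal.ofReal r < EMetric.diam (frontier fourCornersDomain) →
        ∃ z, ball z (c * r) ⊆ ball x r ∩ fourCornersDomain := by
  refine ⟨⟨64, isADR_frontier_fourCornersDomain⟩, ?_⟩
  rintro ⟨c, hc, h⟩
  obtain ⟨k, hk⟩ := exists_pow_lt_of_lt_one hc (by norm_num : (1 / 4 : ℝ) < 1)
  obtain ⟨z, hz⟩ := h _ (shiftPt_mem_frontier_fourCornersDomain k) (1 / 2) (by norm_num)
    ofReal_half_lt_ediam_frontier_fourCornersDomain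
  linarith [le_of_ball_subset_ball_shiftPt_inter_fourCornersDomain hz]
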